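/- arXiv:1904.08374 — 4 statements merged into one kernel-verified Lean document; each statement's English description precedes it below -/
import Mathlib

section
/- Cauchy binomial theorem: for every natural number n and elements a, q of a commutative ring, ∏_{i=0}^{n−1} (1 − a q^i) = Σ_{k=0}^{n} [n choose k]_q (−a)^k q^{k(k−1)/2}, where [n choose k]_q is the Gaussian binomial coefficient. -/
/-- The Gaussian binomial coefficient `[n choose k]_q` as an element of a commutative
ring, via the Pascal-type recurrence `[n+1, k+1]_q = [n, k]_q + q^(k+1) [n, k+1]_q`. -/
def gaussBinom {R : Type*} [CommRing R] (q : R) : ℕ → ℕ → R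
  | _, 0 => 1
  | 0, _ + 1 => 0
  | n + 1, k + 1 => gaussBinom q n k + q ^ (k + 1) * gaussBinom q n (k + 1)

lemma gaussBinom_eq_zero {R : Type*} [CommRing R] (q : R) :
    ∀ n k : ℕ, n < k → gaussBinom q n k = 0
  | 0, _ + 1, _ => rfl
  | n + 1, k + 1, h => by
    rw [gaussBinom, gaussBinom_eq_zero q n k (by omega),
      gaussBinom_eq_zero q n (k + 1) (by omega)]
    ring

lemma tri (k : ℕ) : (k + 1) * k / 2 = k * (k - 1) / 2 + k := by
  cases k with
  | zero => rfl
  | succ m =>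
    have h : (m + 2) * (m + 1) = (m + 1) * m + (m + 1) * 2 := by ring
    rw [Nat.succ_sub_one, h, Nat.add_mul_div_right _ _ (by norm_num)]

/-- Cauchy binomial theorem:
`∏_{i=0}^{n-1} (1 - a q^i) = Σ_{k=0}^{n} [n choose k]_q (-a)^k q^{k(k-1)/2}`. -/
theorem cauchy_binomial {R : Type*} [CommRing R] (a q : R) (n : ℕ) :
    ∏ i ∈ Finset.range n, (1 - a * q ^ i) =
    ∑ k ∈ Finset.range (n + 1), gaussBinom q n k * (-a) ^ k * q ^ (k * (k - 1) / 2) := by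
  induction n generalizing a with
  | zero => simp [gaussBinom]
  | succ n ih =>
    have key : ∏ i ∈ Finset.range (n + 1), (1 - a * q ^ i)
        = (1 - a) * ∏ i ∈ Finset.range n, (1 - (a * q) * q ^ i) := by
      rw [Finset.prod_range_succ']
      simp only [pow_zero, mul_one, pow_succ]
      rw [mul_comm]
      congr 1
      exact Finset.prod_congr rfl fun i _ => by ring
    rw [key, ih (a * q)]
    -- rewrite the summand of the IH sum
    have L1 : ∀ k : ℕ, gaussBinom q n k * (-(a * q)) ^ k * q ^ (k * (k - 1) / 2)
        = gaussBinom q n k * (-a) ^ k * q ^ ((k + 1) * k / 2) := fun k => by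
      rw [show -(a * q) = (-a) * q by ring, mul_pow, tri, pow_add]; ring
    rw [Finset.sum_congr rfl fun k _ => L1 k]
    set S : R := ∑ k ∈ Finset.range (n + 1),
      gaussBinom q n k * (-a) ^ k * q ^ ((k + 1) * k / 2) with hS
    -- RHS manipulation
    rw [Finset.sum_range_succ']
    have h0 : gaussBinom q (n + 1) 0 * (-a) ^ 0 * q ^ (0 * (0 - 1) / 2) = 1 := by
      simp [gaussBinom]
    rw [h0]
    have hterm : ∀ j : ℕ, gaussBinom q (n + 1) (j + 1) * (-a) ^ (j + 1) *
          q ^ ((j + 1) * (j + 1 - 1) / 2)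
        = gaussBinom q n j * (-a) ^ (j + 1) * q ^ ((j + 1) * j / 2)
          + gaussBinom q n (j + 1) * (-a) ^ (j + 1) * q ^ ((j + 2) * (j + 1) / 2) := by
      intro j
      have e : (j + 2) * (j + 1) / 2 = (j + 1) * j / 2 + (j + 1) := by
        have := tri (j + 1); simpa using this
      rw [gaussBinom, Nat.succ_sub_one, e, pow_add]
      ring
    rw [Finset.sum_congr rfl fun j _ => hterm j, Finset.sum_add_distrib]
    -- third sum: last term vanishes
    have h3 : (∑ j ∈ Finset.range (n + 1),
          gaussBinom q n (j + 1) * (-a) ^ (j + 1) * q ^ ((j + 2) * (j + 1) / 2))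
        = ∑ j ∈ Finset.range n,
          gaussBinom q n (j + 1) * (-a) ^ (j + 1) * q ^ ((j + 2) * (j + 1) / 2) := by
      rw [Finset.sum_range_succ, gaussBinom_eq_zero q n (n + 1) (by omega)]
      ring
    rw [h3]
    -- LHS: (1-a)*S = S + ∑ gauss n k * (-a)^(k+1) * q^((k+1)*k/2)
    have hL : (1 - a) * S = S + ∑ k ∈ Finset.range (n + 1),
        gaussBinom q n k * (-a) ^ (k + 1) * q ^ ((k + 1) * k / 2) := by
      rw [hS, Finset.mul_sum, ← Finset.sum_add_distrib]
      exact Finset.sum_congr rfl fun k _ => by ring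
    rw [hL]
    -- peel first term of S
    have hS2 : S = (∑ k ∈ Finset.range n,
        gaussBinom q n (k + 1) * (-a) ^ (k + 1) * q ^ ((k + 2) * (k + 1) / 2)) + 1 := by
      rw [hS, Finset.sum_range_succ']
      simp [gaussBinom]
    rw [hS2]
    ring
end

section
/- For a not a nonpositive integer and all i ≥ 0, the basic hypergeometric functions f_i(z) = ₀Φ₁(; q^{a+i}; q; z q^i) satisfy the contiguous relation f_{i−1}(z) − f_i(z) = (z q^{i−1} / ((1 − q^{a+i−1})(1 − q^{a+i}))) · f_{i+1}(z), as formal power series in z over the field of rational functions in q. -/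
open PowerSeries

/-- The q-Pochhammer symbol `(b;Q)_n = ∏_{j=0}^{n-1} (1 - b Q^j)`. -/
noncomputable def qPoch (b Q : RatFunc ℚ) (n : ℕ) : RatFunc ℚ :=
  ∏ j ∈ Finset.range n, (1 - b * Q ^ j)

/-- `f_i(z) = ₀Φ₁(; q^{a+i}; q; z q^i)` as a formal power series in `z` over the field of
rational functions in `q`, where `₀Φ₁(; b; q; w) = Σ_{n≥0} w^n q^{n(n-1)}/((b;q)_n (q;q)_n)`. -/
noncomputable def phiF (a i : ℕ) : PowerSeries (RatFunc ℚ) :=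
  PowerSeries.mk fun n =>
    (RatFunc.X : RatFunc ℚ) ^ (n * i) * RatFunc.X ^ (n * (n - 1)) /
      (qPoch (RatFunc.X ^ (a + i)) RatFunc.X n * qPoch RatFunc.X RatFunc.X n)

lemma qPoch_succ (b Q : RatFunc ℚ) (n : ℕ) :
    qPoch b Q (n+1) = qPoch b Q n * (1 - b * Q ^ n) := Finset.prod_range_succ _ _

lemma qPoch_shift (m n : ℕ) :
    qPoch (RatFunc.X ^ m) RatFunc.X (n+1)
      = (1 - RatFunc.X ^ m) * qPoch (RatFunc.X ^ (m+1)) RatFunc.X n := by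
  unfold qPoch
  rw [Finset.prod_range_succ']
  rw [mul_comm]
  congr 1
  · simp
  · exact Finset.prod_congr rfl fun j _ => by
      rw [← pow_add, ← pow_add, Nat.add_right_comm, Nat.add_assoc]

lemma one_sub_X_pow_ne_zero (k : ℕ) (hk : 1 ≤ k) :
    (1 - RatFunc.X ^ k : RatFunc ℚ) ≠ 0 := by
  rw [sub_ne_zero]
  intro h
  rw [← RatFunc.algebraMap_X, ← map_pow, ← map_one (algebraMap (Polynomial ℚ) (RatFunc ℚ))] at h
  have h2 := RatFunc.algebraMap_injective ℚ h
  have := congrArg Polynomial.natDegree h2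
  simp [Polynomial.natDegree_X_pow] at this
  omega

lemma qPoch_ne_zero (m : ℕ) (hm : 1 ≤ m) (n : ℕ) :
    qPoch (RatFunc.X ^ m) RatFunc.X n ≠ 0 := by
  unfold qPoch
  refine Finset.prod_ne_zero_iff.2 fun j _ => ?_
  rw [← pow_add]
  exact fun h => one_sub_X_pow_ne_zero (m+j) (le_add_right hm) h

/-- The contiguous relation
`f_{i-1}(z) - f_i(z) = (z q^{i-1}/((1-q^{a+i-1})(1-q^{a+i}))) f_{i+1}(z)`. -/
theorem phiF_contiguous (a i : ℕ) (ha : 1 ≤ a) (hi : 1 ≤ i) :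
    phiF a (i - 1) - phiF a i =
      PowerSeries.C
          ((RatFunc.X : RatFunc ℚ) ^ (i - 1) /
            ((1 - RatFunc.X ^ (a + i - 1)) * (1 - RatFunc.X ^ (a + i)))) *
        PowerSeries.X * phiF a (i + 1) := by
  obtain ⟨A, rfl⟩ : ∃ A, a = A + 1 := ⟨a - 1, by omega⟩
  obtain ⟨J, rfl⟩ : ∃ J, i = J + 1 := ⟨i - 1, by omega⟩
  have e1 : J + 1 - 1 = J := by omega
  have e2 : A + 1 + (J + 1) - 1 = A + J + 1 := by omega
  have e3 : A + 1 + (J + 1) = A + J + 2 := by omega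
  have e4 : A + 1 + (J + 1 + 1) = A + J + 3 := by omega
  have e5 : A + 1 + J = A + J + 1 := by omega
  ext n
  rw [map_sub, mul_assoc, PowerSeries.coeff_C_mul]
  simp only [phiF, coeff_mk, e1, e2, e3, e4, e5]
  cases n with
  | zero =>
      simp [qPoch, PowerSeries.coeff_zero_eq_constantCoeff]
  | succ m =>
      rw [PowerSeries.coeff_succ_X_mul, coeff_mk]
      simp only [Nat.add_sub_cancel]
      have h1 : (1 - RatFunc.X ^ (A+J+1) : RatFunc ℚ) ≠ 0 :=
        one_sub_X_pow_ne_zero _ (by omega)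
      have h2 : (1 - RatFunc.X ^ (A+J+2) : RatFunc ℚ) ≠ 0 :=
        one_sub_X_pow_ne_zero _ (by omega)
      have h3 : (1 - RatFunc.X ^ (A+J+2+m) : RatFunc ℚ) ≠ 0 :=
        one_sub_X_pow_ne_zero _ (by omega)
      have h4 : (1 - RatFunc.X ^ (m+1) : RatFunc ℚ) ≠ 0 :=
        one_sub_X_pow_ne_zero _ (by omega)
      have hQm : qPoch RatFunc.X RatFunc.X m ≠ 0 := by
        have := qPoch_ne_zero 1 le_rfl m
        rwa [pow_one] at this
      have hPm2 : qPoch (RatFunc.X ^ (A+J+2)) RatFunc.X m ≠ 0 :=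
        qPoch_ne_zero _ (by omega) m
      have hPm3 : qPoch (RatFunc.X ^ (A+J+3)) RatFunc.X m ≠ 0 :=
        qPoch_ne_zero _ (by omega) m
      have hQ1 : qPoch RatFunc.X RatFunc.X (m+1)
          = qPoch RatFunc.X RatFunc.X m * (1 - RatFunc.X ^ (m+1)) := by
        rw [qPoch_succ, ← pow_succ']
      have hP1 : qPoch (RatFunc.X ^ (A+J+1)) RatFunc.X (m+1)
          = (1 - RatFunc.X ^ (A+J+1)) * qPoch (RatFunc.X ^ (A+J+2)) RatFunc.X m := by
        rw [qPoch_shift]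
      have hP2 : qPoch (RatFunc.X ^ (A+J+2)) RatFunc.X (m+1)
          = qPoch (RatFunc.X ^ (A+J+2)) RatFunc.X m * (1 - RatFunc.X ^ (A+J+2+m)) := by
        rw [qPoch_succ, ← pow_add]
      have hkey : qPoch (RatFunc.X ^ (A+J+3)) RatFunc.X m
          = qPoch (RatFunc.X ^ (A+J+2)) RatFunc.X m * (1 - RatFunc.X ^ (A+J+2+m))
              / (1 - RatFunc.X ^ (A+J+2)) := by
        rw [eq_div_iff h2, ← hP2, qPoch_shift]
        ring
      have hmm : (RatFunc.X : RatFunc ℚ) ^ ((m+1)*m)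
          = RatFunc.X ^ (m*(m-1)) * RatFunc.X ^ (2*m) := by
        rw [← pow_add]; congr 1
        cases m with
        | zero => rfl
        | succ n => simp [Nat.succ_sub_one]; ring
      rw [hQ1, hP1, hP2, hkey, hmm]
      rw [show A + J + 2 - 1 = A + J + 1 by omega]
      field_simp
      ring
end

section
/- The q-analogue identity sin*_q(z) = z · ₀Φ₁(; q³; q²; −z²q³) / (1−q) holds as formal power series over the field of rational functions in q. -/
open PowerSeries

noncomputable abbrev qv : RatFunc ℚ := RatFunc.X

/-- `sin*_q(z) = Σ_{n≥0} (-1)^n q^{n(2n+1)} z^{2n+1}/(q;q)_{2n+1}`. -/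
noncomputable def sinQStar (q : RatFunc ℚ) : PowerSeries (RatFunc ℚ) :=
  PowerSeries.mk fun m =>
    if ¬ Even m then (-1 : RatFunc ℚ) ^ (m / 2) * q ^ (m * (m - 1) / 2) / qPoch q q m else 0

/-- `₀Φ₁(; b; Q; c z²) = Σ_{n≥0} (c z²)^n Q^{n(n-1)} / ((b;Q)_n (Q;Q)_n)` as a power
series in `z`. -/
noncomputable def phiComp (b Q c : RatFunc ℚ) : PowerSeries (RatFunc ℚ) :=
  PowerSeries.mk fun m =>
    if Even m then
      c ^ (m / 2) * Q ^ ((m / 2) * (m / 2 - 1)) / (qPoch b Q (m / 2) * qPoch Q Q (m / 2))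
    else 0

lemma one_sub_pow_ne (k : ℕ) (hk : k ≠ 0) : (1 : RatFunc ℚ) - qv ^ k ≠ 0 := by
  intro h
  have hx : (qv : RatFunc ℚ) ^ k = 1 := by linear_combination -h
  have : (Polynomial.X ^ k : Polynomial ℚ) = 1 := by
    apply RatFunc.algebraMap_injective (K := ℚ)
    simpa [RatFunc.algebraMap_X] using hx
  have := congrArg Polynomial.natDegree this
  simp [hk] at this

lemma qPoch_ne (a b n : ℕ) (ha : a ≠ 0) : qPoch (qv ^ a) (qv ^ b) n ≠ 0 := by
  unfold qPoch
  rw [Finset.prod_ne_zero_iff]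
  intro j _
  have : (qv ^ a : RatFunc ℚ) * (qv ^ b) ^ j = qv ^ (a + b * j) := by
    rw [← pow_mul, ← pow_add]
  rw [this]
  exact one_sub_pow_ne _ (by omega)

lemma poch_split (n : ℕ) :
    qPoch qv qv (2 * n + 1) = (1 - qv) * (qPoch (qv ^ 3) (qv ^ 2) n * qPoch (qv ^ 2) (qv ^ 2) n) := by
  induction n with
  | zero => simp [qPoch]
  | succ n ih =>
    have h1 : 2 * (n + 1) + 1 = (2 * n + 1) + 1 + 1 := by omega
    rw [h1]
    unfold qPoch at *
    rw [Finset.prod_range_succ, Finset.prod_range_succ, ih, Finset.prod_range_succ,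
      Finset.prod_range_succ]
    ring

/-- `sin*_q(z) = z ₀Φ₁(; q³; q²; -z²q³)/(1-q)`. -/
theorem sinQStar_eq_phi :
    sinQStar qv =
      PowerSeries.C (1 - qv)⁻¹ * PowerSeries.X *
        phiComp (qv ^ 3) (qv ^ 2) (-qv ^ 3) := by
  ext m
  rw [mul_assoc, PowerSeries.coeff_C_mul]
  match m with
  | 0 => simp [sinQStar]
  | m + 1 =>
    rw [PowerSeries.coeff_succ_X_mul]
    simp only [sinQStar, phiComp, coeff_mk]
    rcases Nat.even_or_odd m with he | ho
    · obtain ⟨n, rfl⟩ := he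
      have h1 : ¬ Even (n + n + 1) := by simp [Nat.even_add_one, Nat.even_add]
      have h2 : Even (n + n) := ⟨n, rfl⟩
      rw [if_pos h1, if_pos h2]
      have hn1 : (n + n + 1) / 2 = n := by omega
      have hn2 : (n + n) / 2 = n := by omega
      have hn3 : (n + n + 1) * (n + n + 1 - 1) / 2 = 3 * n + 2 * (n * (n - 1)) := by
        rcases n with _ | k
        · simp
        · have h : k + 1 - 1 = k := rfl
          rw [h]
          have e1 : (k + 1 + (k + 1) + 1) * (k + 1 + (k + 1) + 1 - 1)
              = (3 * (k + 1) + 2 * ((k + 1) * k)) * 2 := by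
            have h2 : k + 1 + (k + 1) + 1 - 1 = 2 * k + 2 := by omega
            rw [h2]; ring
          rw [e1, Nat.mul_div_cancel _ two_pos]
      rw [hn1, hn2, hn3]
      have hP := poch_split n
      have h2n1 : 2 * n + 1 = n + n + 1 := by omega
      rw [h2n1] at hP
      rw [hP]
      have hA := qPoch_ne 3 2 n (by norm_num)
      have hB := qPoch_ne 2 2 n (by norm_num)
      have hq := one_sub_pow_ne 1 one_ne_zero
      rw [pow_one] at hq
      rw [neg_pow]
      field_simp
      ring
    · obtain ⟨n, rfl⟩ := ho
      have h1 : ¬ ¬ Even (2 * n + 1 + 1) := by simp [Nat.even_add_one, parity_simps]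
      have h2 : ¬ Even (2 * n + 1) := by simp [parity_simps]
      rw [if_neg h1, if_neg h2, mul_zero]
end

section
/- Let F_r(t) = Σ_{n≥0} f_{nk+r}(q) t^{nk+r}/(q;q)_{nk+r} for 0 < r ≤ k, where f_m(q) = Σ_{σ ∈ A_k(m)} q^{maj(σ⁻¹)}. Then at q = 1 (i.e., with f_m = |A_k(m)| and exponential generating functions F_r(t) = Σ_{n≥0} |A_k(nk+r)| t^{nk+r}/(nk+r)!), the differential equations F_r' = F_{k−1} · F_r + F_{r−1} for r ≥ 2 and F_1' = F_{k−1} · F_1 + 1 hold. -/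
set_option maxHeartbeats 1000000


attribute [local instance] Classical.propDecidable

/-- `σ` is an alternating `k`-permutation: its (1-indexed) descent set is exactly the set
of multiples of `k` in `{1,…,m-1}`, i.e. `{k, 2k, …, (⌈m/k⌉-1)k}`. -/
def IsKAlt (k : ℕ) {m : ℕ} (σ : Equiv.Perm (Fin m)) : Prop :=
  ∀ i : ℕ, (h : i + 1 < m) →
    (σ ⟨i + 1, h⟩ < σ ⟨i, Nat.lt_of_succ_lt h⟩ ↔ (i + 1) % k = 0)

/-- `|A_k(m)|`: the number of alternating `k`-permutations of `{1,…,m}`. -/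
noncomputable def cardKAlt (k m : ℕ) : ℕ :=
  (Finset.univ.filter fun σ : Equiv.Perm (Fin m) => IsKAlt k σ).card

/-- Alternating property for an arbitrary sequence into a preorder. -/
def IsAltSeq (k : ℕ) {n : ℕ} {α : Type*} [Preorder α] (f : Fin n → α) : Prop :=
  ∀ i : ℕ, (h : i + 1 < n) →
    (f ⟨i + 1, h⟩ < f ⟨i, Nat.lt_of_succ_lt h⟩ ↔ (i + 1) % k = 0)

lemma cardKAlt_eq_card (k m : ℕ) :
    cardKAlt k m = Nat.card {σ : Equiv.Perm (Fin m) // IsKAlt k σ} := by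
  rw [cardKAlt, Nat.card_eq_fintype_card, Fintype.card_subtype]

lemma cardKAlt_zero (k : ℕ) : cardKAlt k 0 = 1 := by
  rw [cardKAlt_eq_card]
  have : ∀ σ : Equiv.Perm (Fin 0), IsKAlt k σ := by
    intro σ i hi; omega
  rw [Nat.card_eq_fintype_card, Fintype.card_subtype]
  rw [Finset.filter_true_of_mem (fun σ _ => this σ), Finset.card_univ, Fintype.card_perm]
  simp

/-- The number of alternating enumerations of a finite set `s` in a linear order
depends only on the cardinality of `s`. -/
lemma card_altEquiv {α : Type*} [LinearOrder α] (k : ℕ) (s : Finset α) :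
    Nat.card {f : Fin s.card ≃ {x // x ∈ s} // IsAltSeq k fun i => f i} =
      cardKAlt k s.card := by
  classical
  let e : Fin s.card ≃o {x // x ∈ s} := s.orderIsoOfFin rfl
  let E : (Fin s.card ≃ {x // x ∈ s}) ≃ Equiv.Perm (Fin s.card) :=
    Equiv.equivCongr (Equiv.refl _) e.symm.toEquiv
  have hE : ∀ (f : Fin s.card ≃ {x // x ∈ s}) (j : Fin s.card), E f j = e.symm (f j) :=
    fun f j => rfl
  have h : ∀ f : Fin s.card ≃ {x // x ∈ s},
      IsAltSeq k (fun i => f i) ↔ IsKAlt k (E f) := by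
    intro f
    constructor <;> intro hf i hi
    · rw [hE, hE, OrderIso.lt_iff_lt]
      exact hf i hi
    · have := hf i hi
      rw [hE, hE, OrderIso.lt_iff_lt] at this
      exact this
  rw [cardKAlt_eq_card]
  exact Nat.card_congr (Equiv.subtypeEquiv E h)

section Splice

variable {n : ℕ} {k : ℕ} {S T : Finset (Fin (n + 1))}

/-- Concatenate an enumeration of `S`, the top element, and an enumeration of `T`. -/
def splice (hT : T.card = n - S.card) (f : Fin S.card → {x // x ∈ S})
    (g : Fin T.card → {x // x ∈ T}) : Fin (n + 1) → Fin (n + 1) := fun i =>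
  if h : (i : ℕ) < S.card then (f ⟨i, h⟩ : Fin (n + 1))
  else if h2 : (i : ℕ) = S.card then Fin.last n
  else (g ⟨(i : ℕ) - S.card - 1, by have := i.isLt; omega⟩ : Fin (n + 1))

lemma splice_lt (hT : T.card = n - S.card) (f : Fin S.card → {x // x ∈ S})
    (g : Fin T.card → {x // x ∈ T}) (i : Fin (n + 1)) (hi : (i : ℕ) < S.card) :
    splice hT f g i = (f ⟨i, hi⟩ : Fin (n + 1)) := by
  rw [splice, dif_pos hi]

lemma splice_eq (hT : T.card = n - S.card) (f : Fin S.card → {x // x ∈ S})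
    (g : Fin T.card → {x // x ∈ T}) (i : Fin (n + 1)) (hi : (i : ℕ) = S.card) :
    splice hT f g i = Fin.last n := by
  rw [splice, dif_neg (by omega), dif_pos hi]

lemma splice_gt (hT : T.card = n - S.card) (f : Fin S.card → {x // x ∈ S})
    (g : Fin T.card → {x // x ∈ T}) (i : Fin (n + 1)) (hi : S.card < (i : ℕ)) :
    splice hT f g i =
      (g ⟨(i : ℕ) - S.card - 1, by have := i.isLt; omega⟩ : Fin (n + 1)) := by
  rw [splice, dif_neg (by omega), dif_neg (by omega)]

lemma splice_injective (hT : T.card = n - S.card)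
    (hTdef : T = (insert (Fin.last n) S)ᶜ) (htop : Fin.last n ∉ S)
    (f : Fin S.card → {x // x ∈ S}) (g : Fin T.card → {x // x ∈ T})
    (hf : Function.Injective f) (hg : Function.Injective g) :
    Function.Injective (splice hT f g) := by
  have hTS : ∀ x : Fin (n + 1), x ∈ T → x ∉ S := by
    intro x hx
    rw [hTdef, Finset.mem_compl, Finset.mem_insert] at hx
    tauto
  have hTtop : ∀ x : Fin (n + 1), x ∈ T → x ≠ Fin.last n := by
    intro x hx
    rw [hTdef, Finset.mem_compl, Finset.mem_insert] at hx
    tauto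
  intro i j hij
  rcases lt_trichotomy ((i : ℕ)) S.card with hi | hi | hi <;>
    rcases lt_trichotomy ((j : ℕ)) S.card with hj | hj | hj
  · rw [splice_lt hT f g i hi, splice_lt hT f g j hj] at hij
    have := hf (Subtype.coe_injective hij)
    have := congrArg Fin.val this
    simp only [Fin.mk.injEq] at this ⊢
    exact Fin.ext this
  · rw [splice_lt hT f g i hi, splice_eq hT f g j hj] at hij
    exact absurd (hij ▸ (f ⟨i, hi⟩).2) htop
  · rw [splice_lt hT f g i hi, splice_gt hT f g j hj] at hij
    exact absurd (hij ▸ (f ⟨i, hi⟩).2) (hTS _ (g _).2)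
  · rw [splice_lt hT f g j hj, splice_eq hT f g i hi] at hij
    exact absurd (hij ▸ (f ⟨j, hj⟩).2) htop
  · exact Fin.ext (hi.trans hj.symm)
  · rw [splice_eq hT f g i hi, splice_gt hT f g j hj] at hij
    exact absurd hij.symm (hTtop _ (g _).2)
  · rw [splice_lt hT f g j hj, splice_gt hT f g i hi] at hij
    exact absurd (hij ▸ (f ⟨j, hj⟩).2) (hTS _ (g _).2)
  · rw [splice_eq hT f g j hj, splice_gt hT f g i hi] at hij
    exact absurd hij (hTtop _ (g _).2)
  · rw [splice_gt hT f g i hi, splice_gt hT f g j hj] at hij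
    have := hg (Subtype.coe_injective hij)
    have := congrArg Fin.val this
    simp only [Fin.mk.injEq] at this
    have hi' := i.isLt
    have hj' := j.isLt
    exact Fin.ext (by omega)

end Splice

section AltSplice

variable {n k : ℕ} {S T : Finset (Fin (n + 1))}

lemma lt_last_of_mem_S (htop : Fin.last n ∉ S) {x : Fin (n + 1)} (hx : x ∈ S) :
    x < Fin.last n :=
  lt_of_le_of_ne (Fin.le_last x) (fun h => htop (h ▸ hx))

lemma lt_last_of_mem_T (hTdef : T = (insert (Fin.last n) S)ᶜ) {x : Fin (n + 1)}
    (hx : x ∈ T) : x < Fin.last n := by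
  rw [hTdef, Finset.mem_compl, Finset.mem_insert] at hx
  push_neg at hx
  exact lt_of_le_of_ne (Fin.le_last x) hx.1

lemma splice_gt' (hT : T.card = n - S.card) (f : Fin S.card → {x // x ∈ S})
    (g : Fin T.card → {x // x ∈ T}) (i : Fin (n + 1)) (j : Fin T.card)
    (hij : (i : ℕ) = S.card + 1 + (j : ℕ)) :
    splice hT f g i = (g j : Fin (n + 1)) := by
  rw [splice_gt hT f g i (by omega)]
  congr 1
  apply congrArg g (Fin.ext ?_)
  show (i : ℕ) - S.card - 1 = (j : ℕ)
  omega

lemma isAlt_splice (hk : 2 ≤ k) (hT : T.card = n - S.card)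
    (hTdef : T = (insert (Fin.last n) S)ᶜ) (htop : Fin.last n ∉ S)
    (hvalid : (S.card < n ∧ (S.card + 1) % k = 0) ∨ (S.card = n ∧ (n % k ≠ 0 ∨ n = 0)))
    (f : Fin S.card → {x // x ∈ S}) (g : Fin T.card → {x // x ∈ T})
    (hf : IsAltSeq k f) (hg : IsAltSeq k g) :
    IsAltSeq k (splice hT f g) := by
  intro i hi
  have hin : i + 1 ≤ n := by omega
  rcases lt_trichotomy (i + 1) S.card with h1 | h1 | h1
  · -- both inside the left block
    rw [splice_lt hT f g ⟨i + 1, hi⟩ h1,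
      splice_lt hT f g ⟨i, Nat.lt_of_succ_lt hi⟩ (show i < S.card by omega)]
    exact Subtype.coe_lt_coe.trans (hf i h1)
  · -- the top sits at position i+1 = S.card; ascent there, need S.card % k ≠ 0
    rw [splice_eq hT f g ⟨i + 1, hi⟩ h1,
      splice_lt hT f g ⟨i, Nat.lt_of_succ_lt hi⟩ (show i < S.card by omega)]
    apply iff_of_false
    · exact asymm (lt_last_of_mem_S htop (f _).2)
    · intro hcon
      rcases hvalid with ⟨hlt', hmod⟩ | ⟨heq, hmod⟩
      · have hd1 : k ∣ S.card + 1 := Nat.dvd_of_mod_eq_zero hmod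
        have hd2 : k ∣ S.card := by rw [← h1]; exact Nat.dvd_of_mod_eq_zero hcon
        have hd : k ∣ 1 := by simpa using Nat.dvd_sub hd1 hd2
        have := Nat.le_of_dvd one_pos hd
        omega
      · rcases hmod with hmod | hmod
        · exact hmod (by rwa [h1, heq] at hcon)
        · omega
  · -- i + 1 > S.card
    rcases lt_trichotomy (i : ℕ) S.card with h2 | h2 | h2
    · omega
    · -- the top sits at position i = S.card; descent there, need (S.card+1) % k = 0
      rw [splice_gt' hT f g ⟨i + 1, hi⟩ ⟨0, by omega⟩
          (show i + 1 = S.card + 1 + ((⟨0, by omega⟩ : Fin T.card) : ℕ) by simp; omega),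
        splice_eq hT f g ⟨i, Nat.lt_of_succ_lt hi⟩ h2]
      apply iff_of_true
      · exact lt_last_of_mem_T hTdef (g _).2
      · rcases hvalid with ⟨hlt', hmod⟩ | ⟨heq, hmod⟩
        · rw [show i + 1 = S.card + 1 by omega]; exact hmod
        · omega
    · -- both inside the right block
      have hpn : S.card < n := by omega
      have hmod : (S.card + 1) % k = 0 := by
        rcases hvalid with ⟨_, hmod⟩ | ⟨heq, _⟩
        · exact hmod
        · omega
      have hmodeq : (i + 1) % k = (i - S.card - 1 + 1) % k := by
        rw [show i + 1 = (i - S.card - 1 + 1) + (S.card + 1) by omega,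
          Nat.add_mod, hmod, add_zero, Nat.mod_mod_of_dvd _ dvd_rfl]
      rw [splice_gt' hT f g ⟨i + 1, hi⟩ ⟨i - S.card - 1 + 1, by omega⟩
          (show i + 1 = S.card + 1 + (i - S.card - 1 + 1) by omega),
        splice_gt' hT f g ⟨i, Nat.lt_of_succ_lt hi⟩ ⟨i - S.card - 1, by omega⟩
          (show i = S.card + 1 + (i - S.card - 1) by omega), hmodeq]
      exact Subtype.coe_lt_coe.trans (hg (i - S.card - 1) (by omega))

end AltSplice

lemma card_filter_val_lt (N p : ℕ) (hp : p ≤ N) :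
    ((Finset.univ : Finset (Fin N)).filter fun i : Fin N => (i : ℕ) < p).card = p := by
  classical
  have h : (Finset.univ.filter fun i : Fin N => (i : ℕ) < p) =
      (Finset.range p).attachFin
        (fun m hm => lt_of_lt_of_le (Finset.mem_range.mp hm) hp) := by
    ext i
    simp [Finset.mem_attachFin]
  rw [h, Finset.card_attachFin, Finset.card_range]

lemma card_fiber (k : ℕ) (hk : 2 ≤ k) (n : ℕ) (S : Finset (Fin (n + 1)))
    (hcard : S.card ≤ n) (htop : Fin.last n ∉ S)
    (hvalid : (S.card < n ∧ (S.card + 1) % k = 0) ∨ (S.card = n ∧ (n % k ≠ 0 ∨ n = 0))) :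
    Nat.card {σ : Equiv.Perm (Fin (n + 1)) // IsKAlt k σ ∧
        σ ⟨S.card, Nat.lt_succ_of_le hcard⟩ = Fin.last n ∧
        (Finset.univ.filter fun i : Fin (n + 1) => (i : ℕ) < S.card).image σ = S} =
      cardKAlt k S.card * cardKAlt k (n - S.card) := by
  classical
  set T : Finset (Fin (n + 1)) := (insert (Fin.last n) S)ᶜ with hTdef
  have hT : T.card = n - S.card := by
    rw [hTdef, Finset.card_compl, Finset.card_insert_of_notMem htop, Fintype.card_fin]
    omega
  have hmemT : ∀ x : Fin (n + 1), x ∈ T ↔ (x ≠ Fin.last n ∧ x ∉ S) := by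
    intro x
    rw [hTdef, Finset.mem_compl, Finset.mem_insert]
    tauto
  -- the domain of the bijection
  have hbij : ∀ (f : Fin S.card ≃ {x // x ∈ S}) (g : Fin T.card ≃ {x // x ∈ T}),
      Function.Bijective (splice hT ⇑f ⇑g) := by
    intro f g
    rw [← Finite.injective_iff_bijective]
    exact splice_injective hT hTdef htop _ _
      (fun a b h => f.injective h) (fun a b h => g.injective h)
  let D := ({f : Fin S.card ≃ {x // x ∈ S} // IsAltSeq k fun i => f i} ×
      {g : Fin T.card ≃ {x // x ∈ T} // IsAltSeq k fun j => g j})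
  let Φ : D → {σ : Equiv.Perm (Fin (n + 1)) // IsKAlt k σ ∧
        σ ⟨S.card, Nat.lt_succ_of_le hcard⟩ = Fin.last n ∧
        (Finset.univ.filter fun i : Fin (n + 1) => (i : ℕ) < S.card).image σ = S} :=
    fun d => ⟨Equiv.ofBijective (splice hT ⇑d.1.1 ⇑d.2.1) (hbij d.1.1 d.2.1), by
      refine ⟨?_, ?_, ?_⟩
      · exact isAlt_splice hk hT hTdef htop hvalid _ _ d.1.2 d.2.2
      · exact splice_eq hT _ _ ⟨S.card, Nat.lt_succ_of_le hcard⟩ rfl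
      · apply Finset.eq_of_subset_of_card_le
        · intro x hx
          obtain ⟨i, hi, rfl⟩ := Finset.mem_image.mp hx
          rw [Finset.mem_filter] at hi
          show splice hT ⇑d.1.1 ⇑d.2.1 i ∈ S
          rw [splice_lt hT _ _ i hi.2]
          exact (d.1.1 _).2
        · rw [Finset.card_image_of_injective _ (Equiv.injective _),
            card_filter_val_lt _ _ (by omega)]⟩
  have hΦ : Function.Bijective Φ := by
    constructor
    · rintro ⟨⟨f, hf⟩, ⟨g, hg⟩⟩ ⟨⟨f', hf'⟩, ⟨g', hg'⟩⟩ h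
      have hfun : splice hT ⇑f ⇑g = splice hT ⇑f' ⇑g' := by
        have h1 := Subtype.ext_iff.mp h
        have h2 := congrArg (fun e : Equiv.Perm (Fin (n + 1)) => ⇑e) h1
        exact h2
      have hff : f = f' := by
        apply Equiv.ext; intro i
        have hi : ((⟨(i : ℕ), by omega⟩ : Fin (n + 1)) : ℕ) < S.card := i.isLt
        have := congrFun hfun ⟨(i : ℕ), by omega⟩
        rw [splice_lt hT _ _ _ hi, splice_lt hT _ _ _ hi] at this
        exact Subtype.coe_injective this
      have hgg : g = g' := by
        apply Equiv.ext; intro j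
        have := congrFun hfun ⟨S.card + 1 + (j : ℕ), by have := j.isLt; omega⟩
        rw [splice_gt' hT _ _ _ j rfl, splice_gt' hT _ _ _ j rfl] at this
        exact Subtype.coe_injective this
      subst hff; subst hgg; rfl
    · rintro ⟨σ, hσ1, hσ2, hσ3⟩
      -- extract the two enumerations from σ
      have hmemS : ∀ i : Fin S.card, σ ⟨(i : ℕ), by omega⟩ ∈ S := by
        intro i
        apply (Finset.ext_iff.mp hσ3 _).mp
        exact Finset.mem_image.mpr ⟨⟨(i : ℕ), by omega⟩,
          Finset.mem_filter.mpr ⟨Finset.mem_univ _, i.isLt⟩, rfl⟩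
      set f₀ : Fin S.card → {x // x ∈ S} :=
        fun i => ⟨σ ⟨(i : ℕ), by omega⟩, hmemS i⟩ with hf₀def
      have hmemTT : ∀ j : Fin T.card,
          σ ⟨S.card + 1 + (j : ℕ), by have := j.isLt; omega⟩ ∈ T := by
        intro j
        rw [hmemT]
        constructor
        · intro he
          have := σ.injective (he.trans hσ2.symm)
          have h3 := congrArg Fin.val this
          simp only [Fin.val_mk] at h3
          omega
        · intro hxS
          obtain ⟨i', hi', he⟩ := Finset.mem_image.mp ((Finset.ext_iff.mp hσ3 _).mpr hxS)
          rw [Finset.mem_filter] at hi'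
          have := congrArg Fin.val (σ.injective he)
          simp at this
          omega
      set g₀ : Fin T.card → {x // x ∈ T} :=
        fun j => ⟨σ ⟨S.card + 1 + (j : ℕ), by have := j.isLt; omega⟩, hmemTT j⟩ with hg₀def
      have hf₀inj : Function.Injective f₀ := by
        intro a b hab
        have := congrArg Fin.val (σ.injective (Subtype.ext_iff.mp hab))
        simp at this
        exact Fin.ext this
      have hg₀inj : Function.Injective g₀ := by
        intro a b hab
        have := congrArg Fin.val (σ.injective (Subtype.ext_iff.mp hab))
        simp at this
        exact Fin.ext this
      have hf₀bij : Function.Bijective f₀ :=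
        (Fintype.bijective_iff_injective_and_card f₀).mpr
          ⟨hf₀inj, by simp [Fintype.card_coe]⟩
      have hg₀bij : Function.Bijective g₀ :=
        (Fintype.bijective_iff_injective_and_card g₀).mpr
          ⟨hg₀inj, by simp [Fintype.card_coe]⟩
      have halt_f : IsAltSeq k f₀ := by
        intro i hi
        exact Subtype.mk_lt_mk.trans (hσ1 i (by omega))
      have halt_g : IsAltSeq k g₀ := by
        intro j hj
        have hpn : S.card < n := by omega
        have hmodS : (S.card + 1) % k = 0 := by
          rcases hvalid with ⟨_, h⟩ | ⟨h, _⟩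
          · exact h
          · omega
        have hidx : S.card + 1 + j + 1 < n + 1 := by omega
        have hh := hσ1 (S.card + 1 + j) hidx
        have hmm : (S.card + 1 + j + 1) % k = (j + 1) % k := by
          rw [show S.card + 1 + j + 1 = (j + 1) + (S.card + 1) by omega,
            Nat.add_mod, hmodS, add_zero, Nat.mod_mod_of_dvd _ dvd_rfl]
        rw [hmm] at hh
        exact Subtype.mk_lt_mk.trans hh
      refine ⟨⟨⟨Equiv.ofBijective f₀ hf₀bij, halt_f⟩,
        ⟨Equiv.ofBijective g₀ hg₀bij, halt_g⟩⟩, ?_⟩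
      apply Subtype.ext
      apply Equiv.ext
      intro i
      show splice hT f₀ g₀ i = σ i
      rcases lt_trichotomy ((i : ℕ)) S.card with hi | hi | hi
      · rw [splice_lt hT f₀ g₀ i hi]
      · rw [splice_eq hT f₀ g₀ i hi]
        have : i = ⟨S.card, Nat.lt_succ_of_le hcard⟩ := Fin.ext hi
        rw [this, hσ2]
      · rw [splice_gt' hT f₀ g₀ i ⟨(i : ℕ) - S.card - 1, by have := i.isLt; omega⟩
          (by simp; omega)]
        show σ _ = σ i
        apply congrArg σ
        apply Fin.ext
        show S.card + 1 + ((i : ℕ) - S.card - 1) = (i : ℕ)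
        omega
  rw [← Nat.card_eq_of_bijective Φ hΦ]
  rw [Nat.card_prod]
  rw [card_altEquiv k S, card_altEquiv k T, hT]

lemma card_pos_fiber (k : ℕ) (hk : 2 ≤ k) (n p : ℕ) (hp : p ≤ n) :
    (Finset.univ.filter fun σ : Equiv.Perm (Fin (n + 1)) =>
        IsKAlt k σ ∧ σ ⟨p, Nat.lt_succ_of_le hp⟩ = Fin.last n).card =
      if (p < n ∧ (p + 1) % k = 0) ∨ (p = n ∧ (n % k ≠ 0 ∨ n = 0)) then
        n.choose p * (cardKAlt k p * cardKAlt k (n - p)) else 0 := by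
  classical
  by_cases hvalid : (p < n ∧ (p + 1) % k = 0) ∨ (p = n ∧ (n % k ≠ 0 ∨ n = 0))
  · rw [if_pos hvalid]
    rw [Finset.card_eq_sum_card_fiberwise (f := fun σ : Equiv.Perm (Fin (n + 1)) =>
        (Finset.univ.filter fun i : Fin (n + 1) => (i : ℕ) < p).image σ)
        (t := Finset.powersetCard p ((Finset.univ : Finset (Fin (n + 1))).erase (Fin.last n)))
        ?memb]
    case memb =>
      intro σ hσ
      rw [Finset.mem_coe, Finset.mem_filter] at hσ
      rw [Finset.mem_coe, Finset.mem_powersetCard]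
      constructor
      · intro x hx
        obtain ⟨i, hi, rfl⟩ := Finset.mem_image.mp hx
        rw [Finset.mem_filter] at hi
        rw [Finset.mem_erase]
        refine ⟨?_, Finset.mem_univ _⟩
        intro he
        have h1 := σ.injective (he.trans hσ.2.2.symm)
        have h2 := congrArg Fin.val h1
        simp only [Fin.val_mk] at h2
        omega
      · rw [Finset.card_image_of_injective _ σ.injective,
          card_filter_val_lt _ _ (by omega)]
    have hterm : ∀ S ∈ Finset.powersetCard p
        ((Finset.univ : Finset (Fin (n + 1))).erase (Fin.last n)),
        ((Finset.univ.filter fun σ : Equiv.Perm (Fin (n + 1)) =>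
            IsKAlt k σ ∧ σ ⟨p, Nat.lt_succ_of_le hp⟩ = Fin.last n).filter
          fun σ : Equiv.Perm (Fin (n + 1)) =>
            (Finset.univ.filter fun i : Fin (n + 1) => (i : ℕ) < p).image ⇑σ = S).card
          = cardKAlt k p * cardKAlt k (n - p) := by
      intro S hS
      rw [Finset.mem_powersetCard] at hS
      obtain ⟨hsub, hcardS⟩ := hS
      have htopS : Fin.last n ∉ S := by
        intro h
        have := hsub h
        simp [Finset.mem_erase] at this
      subst hcardS
      rw [Finset.filter_filter]
      have hcf := card_fiber k hk n S hp htopS hvalid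
      rw [Nat.card_eq_fintype_card, Fintype.card_subtype] at hcf
      rw [← hcf]
      congr 1
      apply Finset.filter_congr
      intro σ _
      exact and_assoc
    rw [Finset.sum_congr rfl hterm, Finset.sum_const, Finset.card_powersetCard,
      Finset.card_erase_of_mem (Finset.mem_univ _), Finset.card_univ, Fintype.card_fin,
      smul_eq_mul, Nat.add_sub_cancel]
  · rw [if_neg hvalid]
    rw [Finset.card_eq_zero, Finset.eq_empty_iff_forall_notMem]
    intro σ hσ
    rw [Finset.mem_filter] at hσ
    obtain ⟨-, hσ1, hσ2⟩ := hσ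
    by_cases hpn : p < n
    · -- descent after the top is automatic, so (p+1) % k = 0 must hold
      have hpf : p + 1 < n + 1 := by omega
      have hne : σ ⟨p + 1, hpf⟩ ≠ Fin.last n := by
        intro he
        have h1 := σ.injective (he.trans hσ2.symm)
        have h2 := congrArg Fin.val h1
        simp only [Fin.val_mk] at h2
        omega
      have hlt : σ ⟨p + 1, hpf⟩ < Fin.last n := lt_of_le_of_ne (Fin.le_last _) hne
      have h2 : σ ⟨p, Nat.lt_of_succ_lt hpf⟩ = Fin.last n := hσ2
      have hmod := (hσ1 p hpf).mp (by rw [h2]; exact hlt)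
      exact hvalid (Or.inl ⟨hpn, hmod⟩)
    · -- p = n; the final ascent forces n % k ≠ 0 unless n = 0
      have hpe : p = n := by omega
      push_neg at hvalid
      have hn0 := hvalid.2 hpe
      have hge : 1 ≤ n := by
        rcases Nat.eq_zero_or_pos n with h | h
        · exact absurd h hn0.2
        · exact h
      have hpf : n - 1 + 1 < n + 1 := by omega
      have hiff := hσ1 (n - 1) hpf
      have e1 : (⟨n - 1 + 1, hpf⟩ : Fin (n + 1)) = ⟨p, Nat.lt_succ_of_le hp⟩ :=
        Fin.ext (by simp; omega)
      rw [e1, hσ2] at hiff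
      have hnot : ¬ (Fin.last n < σ ⟨n - 1, Nat.lt_of_succ_lt hpf⟩) :=
        not_lt.mpr (Fin.le_last _)
      apply hnot
      apply hiff.mpr
      rw [show n - 1 + 1 = n by omega]
      exact hn0.1

lemma cardKAlt_recur (k : ℕ) (hk : 2 ≤ k) (n : ℕ) :
    cardKAlt k (n + 1) = ∑ p ∈ Finset.range (n + 1),
      if (p < n ∧ (p + 1) % k = 0) ∨ (p = n ∧ (n % k ≠ 0 ∨ n = 0)) then
        n.choose p * (cardKAlt k p * cardKAlt k (n - p)) else 0 := by
  classical
  rw [cardKAlt]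
  rw [Finset.card_eq_sum_card_fiberwise (f := fun σ : Equiv.Perm (Fin (n + 1)) =>
      σ.symm (Fin.last n)) (t := Finset.univ) (fun σ _ => Finset.mem_univ _)]
  rw [← Fin.sum_univ_eq_sum_range (fun p =>
    if (p < n ∧ (p + 1) % k = 0) ∨ (p = n ∧ (n % k ≠ 0 ∨ n = 0)) then
      n.choose p * (cardKAlt k p * cardKAlt k (n - p)) else 0) (n + 1)]
  apply Finset.sum_congr rfl
  intro pp _
  have hple : (pp : ℕ) ≤ n := by omega
  rw [Finset.filter_filter]
  rw [← card_pos_fiber k hk n pp hple]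
  congr 1
  apply Finset.filter_congr
  intro σ _
  constructor
  · rintro ⟨h1, h2⟩
    refine ⟨h1, ?_⟩
    have h3 : Fin.last n = σ pp := (Equiv.symm_apply_eq σ).mp h2
    exact h3.symm
  · rintro ⟨h1, h2⟩
    refine ⟨h1, (Equiv.symm_apply_eq σ).mpr ?_⟩
    have h3 : σ pp = Fin.last n := h2
    exact h3.symm

/-- The exponential generating function `F_r(t) = Σ_{n≥0} |A_k(nk+r)| t^{nk+r}/(nk+r)!`. -/
noncomputable def Fgen (k r : ℕ) : PowerSeries ℚ :=
  PowerSeries.mk fun m =>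
    if r ≤ m ∧ (m - r) % k = 0 then (cardKAlt k m : ℚ) / (m.factorial : ℚ) else 0

lemma Fgen_coeff (k r m : ℕ) : (PowerSeries.coeff m) (Fgen k r) =
    if r ≤ m ∧ (m - r) % k = 0 then (cardKAlt k m : ℚ) / (m.factorial : ℚ) else 0 := by
  rw [Fgen, PowerSeries.coeff_mk]

lemma Fgen_deriv_aux (k : ℕ) (hk : 2 ≤ k) (r : ℕ) (hr1 : 1 ≤ r) (hrk : r ≤ k) :
    PowerSeries.derivativeFun (Fgen k r) =
      Fgen k (k - 1) * Fgen k r + (if r = 1 then 1 else Fgen k (r - 1)) := by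
  ext n
  rw [show PowerSeries.derivativeFun (Fgen k r) = PowerSeries.derivative ℚ (Fgen k r) from rfl]
  rw [PowerSeries.coeff_derivative, map_add, PowerSeries.coeff_mul,
    Finset.Nat.sum_antidiagonal_eq_sum_range_succ_mk]
  by_cases hc : r ≤ n + 1 ∧ (n + 1 - r) % k = 0
  · -- main case: use the combinatorial recurrence
    have hd2 : k ∣ n + 1 - r := Nat.dvd_of_mod_eq_zero hc.2
    rw [Fgen_coeff, if_pos hc]
    have hL : (cardKAlt k (n + 1) : ℚ) / ((n + 1).factorial : ℚ) * ((n : ℚ) + 1) =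
        (cardKAlt k (n + 1) : ℚ) / (n.factorial : ℚ) := by
      rw [Nat.factorial_succ]
      have h1 : (n.factorial : ℚ) ≠ 0 := Nat.cast_ne_zero.mpr n.factorial_ne_zero
      have h2 : ((n : ℚ) + 1) ≠ 0 := by positivity
      push_cast
      field_simp
    rw [hL, cardKAlt_recur k hk n]
    rw [Nat.cast_sum, Finset.sum_div]
    have hclaim : ∀ p ∈ Finset.range (n + 1),
        ((if (p < n ∧ (p + 1) % k = 0) ∨ (p = n ∧ (n % k ≠ 0 ∨ n = 0)) then
          (n.choose p * (cardKAlt k p * cardKAlt k (n - p)) : ℕ) else 0 : ℕ) : ℚ) /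
            (n.factorial : ℚ) =
          (PowerSeries.coeff p) (Fgen k (k - 1)) *
            (PowerSeries.coeff (n - p)) (Fgen k r) +
          (if p = n then (PowerSeries.coeff n)
            (if r = 1 then (1 : PowerSeries ℚ) else Fgen k (r - 1)) else 0) := by
      intro p hp
      rw [Finset.mem_range] at hp
      rw [Fgen_coeff, Fgen_coeff]
      by_cases hpn : p = n
      · subst hpn
        rw [if_pos rfl]
        rw [if_neg (by omega : ¬ (r ≤ p - p ∧ (p - p - r) % k = 0)), mul_zero, zero_add]
        by_cases hr : r = 1
        · subst hr
          rw [if_pos rfl, PowerSeries.coeff_one]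
          by_cases hp0 : p = 0
          · subst hp0
            rw [if_pos (by simp : (0 < 0 ∧ (0 + 1) % k = 0) ∨
              (0 = 0 ∧ (0 % k ≠ 0 ∨ 0 = 0)))]
            rw [if_pos rfl]
            simp [cardKAlt_zero]
          · have hpk : p % k = 0 := by
              have he : p + 1 - 1 = p := by omega
              have := hc.2
              rw [he] at this
              exact this
            rw [if_neg (by omega), if_neg (by omega)]
            simp
        · rw [if_neg hr, Fgen_coeff]
          have hrle : r - 1 ≤ p := by omega
          have hmod : (p - (r - 1)) % k = 0 := by
            have he : p - (r - 1) = p + 1 - r := by omega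
            rw [he]; exact hc.2
          have hpk : p % k ≠ 0 := by
            intro hcon
            have hd3 : k ∣ p := Nat.dvd_of_mod_eq_zero hcon
            have hd4 : k ∣ p - (p + 1 - r) := Nat.dvd_sub hd3 hd2
            have he : p - (p + 1 - r) = r - 1 := by omega
            rw [he] at hd4
            have := Nat.le_of_dvd (by omega) hd4
            omega
          have hval : (p < p ∧ (p + 1) % k = 0) ∨ (p = p ∧ (p % k ≠ 0 ∨ p = 0)) :=
            Or.inr ⟨rfl, Or.inl hpk⟩
          have hEc : r - 1 ≤ p ∧ (p - (r - 1)) % k = 0 := ⟨hrle, hmod⟩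
          rw [if_pos hval, if_pos hEc]
          rw [Nat.choose_self, Nat.sub_self, cardKAlt_zero]
          simp
      · have hpn' : p < n := by omega
        rw [if_neg hpn, add_zero]
        by_cases hm : (p + 1) % k = 0
        · -- valid inner term
          have hd : k ∣ p + 1 := Nat.dvd_of_mod_eq_zero hm
          have hkp : k ≤ p + 1 := Nat.le_of_dvd (by omega) hd
          have hcond1 : k - 1 ≤ p ∧ (p - (k - 1)) % k = 0 := by
            refine ⟨by omega, ?_⟩
            apply Nat.mod_eq_zero_of_dvd
            have he : p - (k - 1) = p + 1 - k := by omega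
            rw [he]
            exact Nat.dvd_sub hd dvd_rfl
          have hrle : r ≤ n - p := by
            by_contra hcon
            push_neg at hcon
            have hd5 : k ∣ (p + 1) - (n + 1 - r) := Nat.dvd_sub hd hd2
            have hdpos : 0 < (p + 1) - (n + 1 - r) := by omega
            have := Nat.le_of_dvd hdpos hd5
            omega
          have hcond2 : r ≤ n - p ∧ (n - p - r) % k = 0 := by
            refine ⟨hrle, ?_⟩
            apply Nat.mod_eq_zero_of_dvd
            have he : n - p - r = (n + 1 - r) - (p + 1) := by omega
            rw [he]
            exact Nat.dvd_sub hd2 hd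
          rw [if_pos (Or.inl ⟨hpn', hm⟩), if_pos hcond1, if_pos hcond2]
          have hple : p ≤ n := by omega
          have hcf : ((n.choose p : ℚ)) * (p.factorial : ℚ) * ((n - p).factorial : ℚ)
              = (n.factorial : ℚ) := by
            exact_mod_cast congrArg (fun x : ℕ => (x : ℚ))
              (Nat.choose_mul_factorial_mul_factorial hple)
          have hfp : ((p.factorial : ℚ)) ≠ 0 := Nat.cast_ne_zero.mpr p.factorial_ne_zero
          have hfnp : (((n - p).factorial : ℚ)) ≠ 0 :=
            Nat.cast_ne_zero.mpr (n - p).factorial_ne_zero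
          have hfn : ((n.factorial : ℚ)) ≠ 0 := Nat.cast_ne_zero.mpr n.factorial_ne_zero
          push_cast
          rw [div_mul_div_comm, div_eq_div_iff hfn (by positivity)]
          rw [← hcf]
          ring
        · -- invalid inner term: both sides vanish
          rw [if_neg (by
            rintro (⟨-, hcon⟩ | ⟨hcon, -⟩)
            · exact hm hcon
            · exact hpn hcon)]
          rw [if_neg (by
            rintro ⟨h1, h2⟩
            apply hm
            apply Nat.mod_eq_zero_of_dvd
            have hd3 : k ∣ p - (k - 1) := Nat.dvd_of_mod_eq_zero h2
            have he : p + 1 = (p - (k - 1)) + k := by omega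
            rw [he]
            exact dvd_add hd3 dvd_rfl)]
          push_cast
          simp
    rw [Finset.sum_congr rfl hclaim, Finset.sum_add_distrib, Finset.sum_ite_eq' _ n]
    rw [if_pos (Finset.mem_range.mpr (by omega))]
  · -- degenerate case: every term vanishes
    rw [Fgen_coeff, if_neg hc, zero_mul]
    have hsum : ∀ p ∈ Finset.range (n + 1),
        (PowerSeries.coeff p) (Fgen k (k - 1)) *
          (PowerSeries.coeff (n - p)) (Fgen k r) = 0 := by
      intro p hp
      rw [Finset.mem_range] at hp
      rw [Fgen_coeff, Fgen_coeff]
      by_cases h1 : (k - 1 ≤ p ∧ (p - (k - 1)) % k = 0)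
      · by_cases h2 : (r ≤ n - p ∧ (n - p - r) % k = 0)
        · exfalso
          apply hc
          have hd1 : k ∣ p - (k - 1) := Nat.dvd_of_mod_eq_zero h1.2
          have hd2 : k ∣ n - p - r := Nat.dvd_of_mod_eq_zero h2.2
          refine ⟨by omega, ?_⟩
          apply Nat.mod_eq_zero_of_dvd
          have he : n + 1 - r = (p - (k - 1)) + (n - p - r) + k := by omega
          rw [he]
          exact dvd_add (dvd_add hd1 hd2) dvd_rfl
        · rw [if_neg h2, mul_zero]
      · rw [if_neg h1, zero_mul]
    rw [Finset.sum_eq_zero hsum, zero_add]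
    by_cases hr : r = 1
    · subst hr
      rw [if_pos rfl, PowerSeries.coeff_one, if_neg (by
        intro hn0
        apply hc
        subst hn0
        exact ⟨by omega, by simp⟩)]
    · rw [if_neg hr, Fgen_coeff, if_neg (by
        rintro ⟨h1, h2⟩
        apply hc
        refine ⟨by omega, ?_⟩
        have he : n + 1 - r = n - (r - 1) := by omega
        rw [he]
        exact h2)]

/-- At `q = 1`, the generating functions satisfy `F_r' = F_{k-1}·F_r + F_{r-1}` for
`2 ≤ r ≤ k` and `F_1' = F_{k-1}·F_1 + 1`. -/
theorem Fgen_deriv (k : ℕ) (hk : 2 ≤ k) :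
    (∀ r, 2 ≤ r → r ≤ k →
      PowerSeries.derivativeFun (Fgen k r) =
        Fgen k (k - 1) * Fgen k r + Fgen k (r - 1)) ∧
    PowerSeries.derivativeFun (Fgen k 1) = Fgen k (k - 1) * Fgen k 1 + 1 := by
  constructor
  · intro r hr2 hrk
    have := Fgen_deriv_aux k hk r (by omega) hrk
    rwa [if_neg (by omega)] at this
  · have := Fgen_deriv_aux k hk 1 le_rfl (by omega)
    rwa [if_pos rfl] at this
end
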